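/- Let k ≥ 1 be an integer and let R = ℂ⟦X,Y⟧ be the formal power series ring in two variables over ℂ. Then Ideal.span {2√2·X + 4·X³, √2·(k+1)·Y^k + (2k+2)·Y^{2k+1}} = Ideal.span {X, Y^k}, and the quotient ℂ-vector space R / Ideal.span {X, Y^k} has dimension k. -/

import Mathlib

/-!
Both generators are a unit of `ℂ⟦X,Y⟧` times `X`, resp. `Yᵏ`, because their constant terms
`2√2` and `√2(k+1)` do not vanish; so they generate `⟨X, Yᵏ⟩`. A series lies in `⟨X, Yᵏ⟩`
exactly when its coefficients of `1, Y, …, Yᵏ⁻¹` vanish: the part of the series not divisible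
by `X` is a series in `Y` alone. Hence these `k` coefficients identify the quotient with `ℂᵏ`.
-/

open MvPowerSeries Finsupp

theorem Ideal.span_pair_mul_left_unit {α : Type*} [CommSemiring α] {u v : α}
    (hu : IsUnit u) (hv : IsUnit v) (x y : α) :
    Ideal.span {u * x, v * y} = Ideal.span {x, y} := by
  rw [Ideal.span_insert, Ideal.span_insert, Ideal.span_singleton_mul_left_unit hu,
    Ideal.span_singleton_mul_left_unit hv]

namespace MvPowerSeries

theorem isUnit_C_add_X_mul {σ R : Type*} [Ring R] {a : R} (ha : IsUnit a) (s : σ)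
    (g : MvPowerSeries σ R) : IsUnit (C a + X s * g) := by
  simpa [isUnit_iff_constantCoeff] using ha

variable {R : Type*} [CommRing R]

theorem mem_span_X_zero_X_one_pow_iff {k : ℕ} {f : MvPowerSeries (Fin 2) R} :
    f ∈ Ideal.span {X 0, X 1 ^ k} ↔ ∀ i < k, coeff (single 1 i) f = 0 := by
  constructor
  · rintro hf i hi
    obtain ⟨a, b, rfl⟩ := Ideal.mem_span_pair.mp hf
    rw [map_add, X_dvd_iff.mp (dvd_mul_left _ a) _ (by simp),
      X_pow_dvd_iff.mp (dvd_mul_left _ b) _ (by simpa using hi), add_zero]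
  · intro hf
    -- `p` is the part of `f` free of `X 0`, a series in `X 1` alone.
    let p : MvPowerSeries (Fin 2) R := fun m => if m 0 = 0 then coeff m f else 0
    have hp : ∀ m, coeff m p = if m 0 = 0 then coeff m f else 0 := fun _ => rfl
    have hX0 : X 0 ∣ f - p := X_dvd_iff.mpr fun m hm => by simp [hp, hm]
    have hX1 : X 1 ^ k ∣ p := by
      refine X_pow_dvd_iff.mpr fun m hm => ?_
      rw [hp]
      split_ifs with hm0
      · have hm_single : m = single 1 (m 1) := by
          ext j; fin_cases j <;> simp [hm0]
        rw [hm_single]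
        exact hf _ hm
      · rfl
    rw [← sub_add_cancel f p]
    exact Ideal.add_mem _ (Ideal.mem_of_dvd _ hX0 (Ideal.subset_span (by simp)))
      (Ideal.mem_of_dvd _ hX1 (Ideal.subset_span (by simp)))

noncomputable def coeffsXOnePow (k : ℕ) : MvPowerSeries (Fin 2) R →ₗ[R] Fin k → R :=
  LinearMap.pi fun i => coeff (single 1 (i : ℕ))

theorem ker_coeffsXOnePow (k : ℕ) :
    LinearMap.ker (coeffsXOnePow (R := R) k) =
      (Ideal.span {X 0, X 1 ^ k} : Ideal (MvPowerSeries (Fin 2) R)).restrictScalars R := by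
  ext f
  simp [coeffsXOnePow, mem_span_X_zero_X_one_pow_iff, funext_iff, Fin.forall_iff]

theorem coeffsXOnePow_surjective (k : ℕ) : Function.Surjective (coeffsXOnePow (R := R) k) := by
  classical
  intro c
  refine ⟨∑ i : Fin k, monomial (single 1 (i : ℕ)) (c i), funext fun j => ?_⟩
  simp [coeffsXOnePow, coeff_monomial, (single_injective (1 : Fin 2)).eq_iff, Fin.val_inj]

theorem finrank_quotient_span_X_zero_X_one_pow {K : Type*} [Field K] (k : ℕ) :
    Module.finrank K (MvPowerSeries (Fin 2) K ⧸
      Ideal.span {(X 0 : MvPowerSeries (Fin 2) K), X 1 ^ k}) = k := by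
  rw [← (Submodule.Quotient.restrictScalarsEquiv K
    (Ideal.span {X 0, X 1 ^ k} : Ideal (MvPowerSeries (Fin 2) K))).finrank_eq, ← ker_coeffsXOnePow,
    (LinearMap.quotKerEquivOfSurjective _ (coeffsXOnePow_surjective k)).finrank_eq,
    Module.finrank_fin_fun]

end MvPowerSeries

theorem stmt11_general (k : ℕ) :
    Ideal.span
      {(C (σ := Fin 2) (R := ℂ) ((2 * Real.sqrt 2 : ℝ) : ℂ)) * X 0 + (C (σ := Fin 2) (R := ℂ) 4) * (X 0) ^ 3,
       (C (σ := Fin 2) (R := ℂ) ((Real.sqrt 2 * (k + 1) : ℝ) : ℂ)) * (X 1) ^ k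
         + (C (σ := Fin 2) (R := ℂ) ((2 * k + 2 : ℕ) : ℂ)) * (X 1) ^ (2 * k + 1)} =
      Ideal.span {(X 0 : MvPowerSeries (Fin 2) ℂ), (X 1) ^ k} ∧
    Module.finrank ℂ
      (MvPowerSeries (Fin 2) ℂ ⧸
        Ideal.span {(X 0 : MvPowerSeries (Fin 2) ℂ), (X 1) ^ k}) = k := by
  refine ⟨?_, finrank_quotient_span_X_zero_X_one_pow k⟩
  have hX : IsUnit ((2 * Real.sqrt 2 : ℝ) : ℂ) := by simp
  have hY : IsUnit ((Real.sqrt 2 * (k + 1) : ℝ) : ℂ) := by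
    rw [isUnit_iff_ne_zero, Complex.ofReal_ne_zero]; positivity
  refine Eq.trans ?_ (Ideal.span_pair_mul_left_unit (isUnit_C_add_X_mul hX 0 (C 4 * X 0))
    (isUnit_C_add_X_mul hY 1 (C ((2 * k + 2 : ℕ) : ℂ) * X 1 ^ k)) (X 0) (X 1 ^ k))
  congr 3 <;> ring

/-- Proof of Theorem 3.15: the ideal generated by the partial derivatives
`2√2·X + 4·X³` and `√2·(k+1)·Yᵏ + (2k+2)·Y^{2k+1}` of the locus-of-degeneracy
function equals `⟨X, Yᵏ⟩`, whose codimension in `ℂ⟦X,Y⟧` is `k`. -/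
theorem stmt11 (k : ℕ) (hk : 1 ≤ k) :
    Ideal.span
      {(C (σ := Fin 2) (R := ℂ) ((2 * Real.sqrt 2 : ℝ) : ℂ)) * X 0 + (C (σ := Fin 2) (R := ℂ) 4) * (X 0) ^ 3,
       (C (σ := Fin 2) (R := ℂ) ((Real.sqrt 2 * (k + 1) : ℝ) : ℂ)) * (X 1) ^ k
         + (C (σ := Fin 2) (R := ℂ) ((2 * k + 2 : ℕ) : ℂ)) * (X 1) ^ (2 * k + 1)} =
      Ideal.span {(X 0 : MvPowerSeries (Fin 2) ℂ), (X 1) ^ k} ∧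
    Module.finrank ℂ
      (MvPowerSeries (Fin 2) ℂ ⧸
        Ideal.span {(X 0 : MvPowerSeries (Fin 2) ℂ), (X 1) ^ k}) = k :=
  stmt11_general k
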